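/- arXiv:1506.04171 — 2 statements merged into one kernel-verified Lean document; each statement's English description precedes it below -/
import Mathlib

section
/- If k ∈ ℕ with k ≥ 1, then the packing of k² unit circles centered at the points of the grid {2i : 0 ≤ i < k} × {2j : 0 ≤ j < k} is totally separable and has exactly 2k(k−1) = 2(n − √n) tangencies, where n = k². -/
open EuclideanSpace Metric Finset
open scoped Classical

noncomputable section

/-- The tangent hyperplane to a pair of touching unit spheres centered at `x` and `y`:
the hyperplane through the midpoint `(x+y)/2` perpendicular to `x - y`. -/
def tangentHyp {d : ℕ} (x y : EuclideanSpace ℝ (Fin d)) : Set (EuclideanSpace ℝ (Fin d)) :=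
  {p | (inner ℝ (p - midpoint ℝ x y) (x - y) : ℝ) = 0}

/-- A set of centers forms a packing of unit spheres: pairwise distances are at least 2. -/
def IsPacking {d : ℕ} (S : Set (EuclideanSpace ℝ (Fin d))) : Prop :=
  S.Pairwise fun x y => 2 ≤ dist x y

/-- A packing is totally separable if every tangent hyperplane of a touching pair avoids the
open unit ball about every center. -/
def TotallySeparable {d : ℕ} (S : Set (EuclideanSpace ℝ (Fin d))) : Prop :=
  ∀ x ∈ S, ∀ y ∈ S, dist x y = 2 → ∀ z ∈ S, tangentHyp x y ∩ ball z 1 = ∅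

/-- The number of tangencies (unordered pairs of centers at distance exactly 2)
of a finite packing. -/
def tangencies {d : ℕ} (S : Finset (EuclideanSpace ℝ (Fin d))) : ℕ :=
  (S.offDiag.filter fun p => dist p.1 p.2 = 2).card / 2

/-!
The centers lie in the lattice `2ℤ²`. Distinct lattice points differ by at least `2` in some
coordinate, so they form a packing. If `x, y` are touching lattice points with midpoint `m`, then
for every lattice point `z` we have
`⟪z - m, x - y⟫ = ⟪z - y, x - y⟫ - ‖x - y‖² / 2 ≡ 2 (mod 4)`, so `z` lies at distance at least
`2 / ‖x - y‖ = 1` from the tangent line: total separability holds in every dimension. Finally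
two grid circles touch exactly when their indices are neighbours in the grid graph `Pₖ □ Pₖ`,
which has `2k(k - 1)` edges.
-/

def evenLattice (d : ℕ) : Set (EuclideanSpace ℝ (Fin d)) :=
  {x | ∀ i, ∃ n : ℤ, x i = 2 * n}

namespace evenLattice

variable {d : ℕ} {x y z : EuclideanSpace ℝ (Fin d)}

lemma sub_mem (hx : x ∈ evenLattice d) (hy : y ∈ evenLattice d) : x - y ∈ evenLattice d := by
  intro i
  obtain ⟨m, hm⟩ := hx i
  obtain ⟨n, hn⟩ := hy i
  exact ⟨m - n, by rw [PiLp.sub_apply, hm, hn, Int.cast_sub]; ring⟩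

lemma exists_inner_eq_four_mul (hx : x ∈ evenLattice d) (hy : y ∈ evenLattice d) :
    ∃ n : ℤ, inner ℝ x y = 4 * n := by
  choose m hm using hx
  choose n hn using hy
  refine ⟨∑ i, n i * m i, ?_⟩
  simp only [PiLp.inner_apply, RCLike.inner_apply, conj_trivial, hm, hn, Int.cast_sum,
    Int.cast_mul, Finset.mul_sum]
  exact Finset.sum_congr rfl fun i _ => by ring

lemma two_le_dist (hx : x ∈ evenLattice d) (hy : y ∈ evenLattice d) (hxy : x ≠ y) :
    2 ≤ dist x y := by
  obtain ⟨i, hi⟩ : ∃ i, x i ≠ y i := by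
    by_contra! h
    exact hxy (PiLp.ext h)
  obtain ⟨n, hn⟩ := sub_mem hx hy i
  have hn0 : n ≠ 0 := by
    rintro rfl
    exact hi (sub_eq_zero.mp (by simpa using hn))
  calc (2 : ℝ) ≤ |2 * (n : ℝ)| := by
        rw [abs_mul, abs_two]
        have : (1 : ℝ) ≤ |(n : ℝ)| := by exact_mod_cast Int.one_le_abs hn0
        linarith
    _ = dist (x i) (y i) := by rw [Real.dist_eq, ← hn, PiLp.sub_apply]
    _ ≤ dist x y := PiLp.dist_apply_le x y i

lemma one_le_dist_of_mem_tangentHyp (hx : x ∈ evenLattice d) (hy : y ∈ evenLattice d)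
    (hz : z ∈ evenLattice d) (hxy : dist x y = 2) {p : EuclideanSpace ℝ (Fin d)}
    (hp : p ∈ tangentHyp x y) : 1 ≤ dist z p := by
  obtain ⟨n, hn⟩ := exists_inner_eq_four_mul (sub_mem hz hy) (sub_mem hx hy)
  have hnorm : ‖x - y‖ = 2 := by rwa [← dist_eq_norm]
  have hinner : inner ℝ (z - p) (x - y) = 4 * n - 2 := by
    have hmid : z - p = (z - y) - (1 / 2 : ℝ) • (x - y) - (p - midpoint ℝ x y) := by
      rw [midpoint_eq_smul_add, invOf_eq_inv]; module
    rw [hmid, inner_sub_left, inner_sub_left, hp, inner_smul_left, real_inner_self_eq_norm_sq,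
      hnorm, hn]
    norm_num
  have h2 : (2 : ℝ) ≤ |4 * (n : ℝ) - 2| := by
    have : (2 : ℤ) ≤ |4 * n - 2| := by
      rcases abs_cases (4 * n - 2) with ⟨h, _⟩ | ⟨h, _⟩ <;> omega
    exact_mod_cast this
  have hcs := abs_real_inner_le_norm (z - p) (x - y)
  rw [hinner, hnorm, ← dist_eq_norm] at hcs
  linarith

lemma isPacking_of_subset {S : Set (EuclideanSpace ℝ (Fin d))} (hS : S ⊆ evenLattice d) :
    IsPacking S :=
  fun _ hx _ hy hxy => two_le_dist (hS hx) (hS hy) hxy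

lemma totallySeparable_of_subset {S : Set (EuclideanSpace ℝ (Fin d))}
    (hS : S ⊆ evenLattice d) : TotallySeparable S := by
  intro x hx y hy hxy z hz
  refine Set.eq_empty_of_forall_notMem fun p ⟨hp, hpz⟩ => ?_
  have := one_le_dist_of_mem_tangentHyp (hS hx) (hS hy) (hS hz) hxy hp
  rw [mem_ball, dist_comm] at hpz
  linarith

end evenLattice

def gridCenter (p : ℕ × ℕ) : EuclideanSpace ℝ (Fin 2) :=
  (WithLp.equiv 2 (Fin 2 → ℝ)).symm ![2 * (p.1 : ℝ), 2 * (p.2 : ℝ)]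

@[simp] lemma gridCenter_zero (p : ℕ × ℕ) : gridCenter p 0 = 2 * p.1 := rfl

@[simp] lemma gridCenter_one (p : ℕ × ℕ) : gridCenter p 1 = 2 * p.2 := rfl

lemma gridCenter_mem_evenLattice (p : ℕ × ℕ) : gridCenter p ∈ evenLattice 2 := by
  intro i
  fin_cases i
  · exact ⟨p.1, by simp⟩
  · exact ⟨p.2, by simp⟩

lemma gridCenter_injective : Function.Injective gridCenter := by
  intro p q h
  have h0 := congrArg (· 0) h
  have h1 := congrArg (· 1) h
  simp only [gridCenter_zero, gridCenter_one] at h0 h1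
  exact Prod.ext (by simpa using h0) (by simpa using h1)

lemma dist_gridCenter_sq (p q : ℕ × ℕ) :
    dist (gridCenter p) (gridCenter q) ^ 2 =
      4 * ((((p.1 : ℤ) - q.1) ^ 2 + ((p.2 : ℤ) - q.2) ^ 2 : ℤ) : ℝ) := by
  rw [EuclideanSpace.dist_eq, Real.sq_sqrt (by positivity), Fin.sum_univ_two]
  simp only [gridCenter_zero, gridCenter_one, Real.dist_eq, sq_abs]
  push_cast
  ring

lemma Int.sq_add_sq_eq_one_iff {u v : ℤ} :
    u ^ 2 + v ^ 2 = 1 ↔ (u = 0 ∧ (v = 1 ∨ v = -1)) ∨ ((u = 1 ∨ u = -1) ∧ v = 0) := by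
  constructor
  · intro h
    have hu : |u| ≤ 1 := sq_le_one_iff_abs_le_one u |>.mp (by nlinarith)
    have hv : |v| ≤ 1 := sq_le_one_iff_abs_le_one v |>.mp (by nlinarith)
    rw [abs_le] at hu hv
    obtain ⟨hu₁, hu₂⟩ := hu
    obtain ⟨hv₁, hv₂⟩ := hv
    interval_cases u <;> interval_cases v <;> simp_all
  · rintro (⟨rfl, rfl | rfl⟩ | ⟨rfl | rfl, rfl⟩) <;> norm_num

/-- `hasse ℕ` is the infinite path graph, so `hasse ℕ □ hasse ℕ` is the grid graph on `ℕ × ℕ`. -/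
lemma dist_gridCenter_eq_two_iff (p q : ℕ × ℕ) :
    dist (gridCenter p) (gridCenter q) = 2 ↔
      (SimpleGraph.hasse ℕ □ SimpleGraph.hasse ℕ).Adj p q := by
  rw [← sq_eq_sq₀ dist_nonneg zero_le_two, dist_gridCenter_sq,
    show (2 : ℝ) ^ 2 = 4 * ((1 : ℤ) : ℝ) by norm_num, mul_right_inj' four_ne_zero, Int.cast_inj,
    Int.sq_add_sq_eq_one_iff, SimpleGraph.boxProd_adj, SimpleGraph.hasse_adj,
    SimpleGraph.hasse_adj]
  simp only [Nat.covBy_iff_add_one_eq]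
  omega

lemma card_filter_fst_eq_snd {α : Type*} (s : Finset α) : #{x ∈ s ×ˢ s | x.1 = x.2} = #s := by
  rw [← diag_card s]
  congr 1
  ext x
  simp only [mem_filter, mem_product, mem_diag]
  grind

lemma card_filter_boxProd_adj {α β : Type*} (G : SimpleGraph α) (H : SimpleGraph β)
    (s : Finset α) (t : Finset β) :
    #{x ∈ (s ×ˢ t) ×ˢ (s ×ˢ t) | (G □ H).Adj x.1 x.2} =
      #{x ∈ s ×ˢ s | G.Adj x.1 x.2} * #t + #s * #{x ∈ t ×ˢ t | H.Adj x.1 x.2} := by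
  have htranspose : #{x ∈ (s ×ˢ t) ×ˢ (s ×ˢ t) | (G □ H).Adj x.1 x.2} =
      #{y ∈ (s ×ˢ s) ×ˢ (t ×ˢ t) |
        (G.Adj y.1.1 y.1.2 ∧ y.2.1 = y.2.2) ∨ (y.1.1 = y.1.2 ∧ H.Adj y.2.1 y.2.2)} := by
    refine card_nbij' (fun x => ((x.1.1, x.2.1), (x.1.2, x.2.2)))
      (fun y => ((y.1.1, y.2.1), (y.1.2, y.2.2))) ?_ ?_ (fun _ _ => rfl) (fun _ _ => rfl) <;>
    · intro x hx
      simp only [mem_coe, mem_filter, mem_product, SimpleGraph.boxProd_adj] at hx ⊢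
      tauto
  have hdisj : Disjoint {y ∈ (s ×ˢ s) ×ˢ (t ×ˢ t) | G.Adj y.1.1 y.1.2 ∧ y.2.1 = y.2.2}
      {y ∈ (s ×ˢ s) ×ˢ (t ×ˢ t) | y.1.1 = y.1.2 ∧ H.Adj y.2.1 y.2.2} :=
    disjoint_filter.2 fun _ _ h₁ h₂ => h₁.1.ne h₂.1
  rw [htranspose, filter_or, card_union_of_disjoint hdisj,
    filter_product (fun a : α × α => G.Adj a.1 a.2) (fun b : β × β => b.1 = b.2),
    filter_product (fun a : α × α => a.1 = a.2) (fun b : β × β => H.Adj b.1 b.2),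
    card_product, card_product, card_filter_fst_eq_snd, card_filter_fst_eq_snd]

lemma card_filter_hasse_adj_range (k : ℕ) :
    #{x ∈ range k ×ˢ range k | (SimpleGraph.hasse ℕ).Adj x.1 x.2} = 2 * (k - 1) := by
  have hsucc : #{x ∈ range k ×ˢ range k | x.1 + 1 = x.2} = k - 1 := by
    rw [← card_range (k - 1)]
    refine card_nbij' Prod.fst (fun a => (a, a + 1)) ?_ ?_ ?_ ?_ <;> intro x <;> grind
  have hpred : #{x ∈ range k ×ˢ range k | x.2 + 1 = x.1} = k - 1 := by
    rw [← hsucc]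
    refine card_nbij' Prod.swap Prod.swap ?_ ?_ ?_ ?_ <;> intro x <;> grind
  simp only [SimpleGraph.hasse_adj, Nat.covBy_iff_add_one_eq]
  rw [filter_or, card_union_of_disjoint (disjoint_filter.2 fun _ _ h₁ h₂ => by omega), hsucc,
    hpred, two_mul]

lemma card_filter_dist_eq_two_offDiag_image_gridCenter (s : Finset (ℕ × ℕ)) :
    #{x ∈ (s.image gridCenter).offDiag | dist x.1 x.2 = 2} =
      #{x ∈ s ×ˢ s | (SimpleGraph.hasse ℕ □ SimpleGraph.hasse ℕ).Adj x.1 x.2} := by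
  symm
  refine card_nbij (Prod.map gridCenter gridCenter) ?_
    (gridCenter_injective.prodMap gridCenter_injective).injOn ?_
  · rintro ⟨p, q⟩ h
    simp only [coe_filter, mem_product, ← dist_gridCenter_eq_two_iff, Set.mem_ofPred_eq] at h
    refine mem_filter.2
      ⟨mem_offDiag.2 ⟨mem_image_of_mem _ h.1.1, mem_image_of_mem _ h.1.2, ?_⟩, h.2⟩
    exact ne_of_apply_ne (dist (gridCenter p)) (by simp [h.2])
  · rintro ⟨u, v⟩ h
    simp only [coe_filter, mem_offDiag, mem_image, Set.mem_ofPred_eq] at h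
    obtain ⟨⟨⟨p, hp, rfl⟩, ⟨q, hq, rfl⟩, -⟩, hd⟩ := h
    exact ⟨(p, q), by simpa [hp, hq, dist_gridCenter_eq_two_iff] using hd, rfl⟩

theorem stmt3_general (k : ℕ)
    (S : Finset (EuclideanSpace ℝ (Fin 2)))
    (hS : S = (Finset.range k ×ˢ Finset.range k).image fun p =>
      (WithLp.equiv 2 (Fin 2 → ℝ)).symm ![2 * (p.1 : ℝ), 2 * (p.2 : ℝ)]) :
    S.card = k ^ 2 ∧ IsPacking ((S : Finset (EuclideanSpace ℝ (Fin 2))) : Set (EuclideanSpace ℝ (Fin 2))) ∧ TotallySeparable ((S : Finset (EuclideanSpace ℝ (Fin 2))) : Set (EuclideanSpace ℝ (Fin 2))) ∧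
      tangencies S = 2 * k * (k - 1) ∧
      (2 * k * (k - 1) : ℝ) = 2 * ((k ^ 2 : ℕ) - Real.sqrt (k ^ 2 : ℕ)) := by
  change S = (range k ×ˢ range k).image gridCenter at hS
  have hlattice : (S : Set (EuclideanSpace ℝ (Fin 2))) ⊆ evenLattice 2 := by
    rw [hS, coe_image]
    exact Set.image_subset_iff.2 fun p _ => gridCenter_mem_evenLattice p
  have hpairs : #{x ∈ S.offDiag | dist x.1 x.2 = 2} = 2 * (2 * k * (k - 1)) := by
    rw [hS, card_filter_dist_eq_two_offDiag_image_gridCenter, card_filter_boxProd_adj,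
      card_filter_hasse_adj_range, card_range]
    ring
  refine ⟨?_, evenLattice.isPacking_of_subset hlattice,
    evenLattice.totallySeparable_of_subset hlattice, ?_, ?_⟩
  · rw [hS, card_image_of_injective _ gridCenter_injective, card_product, card_range, sq]
  · rw [tangencies, hpairs, Nat.mul_div_cancel_left _ two_pos]
  · push_cast
    rw [Real.sqrt_sq k.cast_nonneg]
    ring

theorem stmt3 (k : ℕ) (hk : 1 ≤ k)
    (S : Finset (EuclideanSpace ℝ (Fin 2)))
    (hS : S = (Finset.range k ×ˢ Finset.range k).image fun p =>
      (WithLp.equiv 2 (Fin 2 → ℝ)).symm ![2 * (p.1 : ℝ), 2 * (p.2 : ℝ)]) :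
    S.card = k ^ 2 ∧ IsPacking ((S : Finset (EuclideanSpace ℝ (Fin 2))) : Set (EuclideanSpace ℝ (Fin 2))) ∧ TotallySeparable ((S : Finset (EuclideanSpace ℝ (Fin 2))) : Set (EuclideanSpace ℝ (Fin 2))) ∧
      tangencies S = 2 * k * (k - 1) ∧
      (2 * k * (k - 1) : ℝ) = 2 * ((k ^ 2 : ℕ) - Real.sqrt (k ^ 2 : ℕ)) :=
  stmt3_general k S hS
end
end

section
/- For k ∈ ℕ, k ≥ 1, and n = k², the maximum number of pairs at distance exactly 2 among any n points in 2ℤ² equals 2k(k−1). -/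
open EuclideanSpace Metric Finset
open scoped Classical

noncomputable section

/-!
Identify the `n = k²` points with a finite set `T ⊆ ℤ²` via `p ↦ 2p`. Tangent pairs are then
lattice-adjacent pairs, so their number is `h + v`, where `h` counts the `p ∈ T` with
`p + (1, 0) ∈ T` and `v` those with `p + (0, 1) ∈ T`. The rightmost point of each of the `R`
occupied rows has no right neighbour, so `h ≤ n - R`; likewise `v ≤ n - C` for the `C` occupied
columns. As `T` lies in the product of its row and column projections, `n ≤ R C`, hence
`R + C ≥ 2√n = 2k` and `h + v ≤ 2k² - 2k`, which the `k × k` square attains.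
-/

open scoped Pointwise

section Counting

variable {G : Type*} [AddCommGroup G] [DecidableEq G]

lemma card_filter_sub_eq (T : Finset G) (d : G) :
    #{pq ∈ T ×ˢ T | pq.2 - pq.1 = d} = #{p ∈ T | p + d ∈ T} := by
  refine (card_nbij' (fun p => (p, p + d)) Prod.fst ?_ ?_ (fun _ _ => rfl) ?_).symm
  · intro p hp
    simp_all
  · rintro ⟨p, q⟩ h
    simp only [coe_filter, mem_product, Set.mem_ofPred_eq] at h ⊢
    obtain ⟨⟨hp, hq⟩, rfl⟩ := h
    simpa using And.intro hp hq
  · rintro ⟨p, q⟩ h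
    simp only [coe_filter, mem_product, Set.mem_ofPred_eq] at h
    simp [← h.2]

lemma card_filter_sub_mem (T D : Finset G) :
    #{pq ∈ T ×ˢ T | pq.2 - pq.1 ∈ D} = ∑ d ∈ D, #{p ∈ T | p + d ∈ T} := by
  rw [card_eq_sum_card_fiberwise (s := {pq ∈ T ×ˢ T | pq.2 - pq.1 ∈ D})
    (f := fun pq => pq.2 - pq.1) fun pq hpq => (mem_filter.1 hpq).2]
  refine sum_congr rfl fun d hd => ?_
  rw [filter_filter, ← card_filter_sub_eq]
  congr 1
  exact filter_congr fun pq _ => ⟨fun h => h.2, fun h => ⟨h ▸ hd, h⟩⟩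

lemma card_filter_sub_mem_union_neg (T D : Finset G) (hD : Disjoint D (-D)) :
    #{pq ∈ T ×ˢ T | pq.2 - pq.1 ∈ D ∪ -D} = 2 * #{pq ∈ T ×ˢ T | pq.2 - pq.1 ∈ D} := by
  have hswap :
      #{pq ∈ T ×ˢ T | pq.2 - pq.1 ∈ -D} = #{pq ∈ T ×ˢ T | pq.2 - pq.1 ∈ D} := by
    refine card_nbij' Prod.swap Prod.swap ?_ ?_ (fun _ _ => rfl) (fun _ _ => rfl) <;>
      · rintro ⟨p, q⟩
        simp [neg_sub, and_comm]
  simp only [mem_union, filter_or]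
  rw [card_union_of_disjoint, hswap, two_mul]
  exact disjoint_filter.2 fun _ _ h => disjoint_left.1 hD h

end Counting

lemma card_image_le_card_filter_notMem {α β γ : Type*} [DecidableEq α] [DecidableEq β]
    [LinearOrder γ] (T : Finset α) (f : α → β) (g : α → γ) (s : α → α)
    (hf : ∀ p, f (s p) = f p) (hg : ∀ p, g p < g (s p)) :
    #(T.image f) ≤ #{p ∈ T | s p ∉ T} := by
  refine card_le_card_of_surjOn f fun b hb => ?_
  obtain ⟨a, ha, rfl⟩ := mem_image.1 hb
  -- the point of the fibre furthest along `g` cannot step to a point of `T`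
  obtain ⟨p, hp, hmax⟩ := exists_max_image {q ∈ T | f q = f a} g ⟨a, by simp [ha]⟩
  rw [mem_filter] at hp
  refine ⟨p, mem_filter.2 ⟨hp.1, fun hsp => ?_⟩, hp.2⟩
  exact (hg p).not_ge (hmax (s p) (mem_filter.2 ⟨hsp, (hf p).trans hp.2⟩))

lemma card_filter_mem_add_card_image_le {α β γ : Type*} [DecidableEq α] [DecidableEq β]
    [LinearOrder γ] (T : Finset α) (f : α → β) (g : α → γ) (s : α → α)
    (hf : ∀ p, f (s p) = f p) (hg : ∀ p, g p < g (s p)) :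
    #{p ∈ T | s p ∈ T} + #(T.image f) ≤ #T := by
  have := card_filter_add_card_filter_not (s := T) (fun p => s p ∈ T)
  have := card_image_le_card_filter_notMem T f g s hf hg
  omega

lemma card_horizontal_add_vertical_le (T : Finset (ℤ × ℤ)) (k : ℕ) (hT : #T = k ^ 2) :
    #{p ∈ T | p + (1, 0) ∈ T} + #{p ∈ T | p + (0, 1) ∈ T} ≤ 2 * k * (k - 1) := by
  have hrows := card_filter_mem_add_card_image_le T Prod.snd Prod.fst (· + (1, 0))
    (fun _ => by simp) (fun _ => by simp)
  have hcols := card_filter_mem_add_card_image_le T Prod.fst Prod.snd (· + (0, 1))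
    (fun _ => by simp) (fun _ => by simp)
  have hlines : 2 * k ≤ #(T.image Prod.fst) + #(T.image Prod.snd) :=
    two_mul_le_add_of_sq_le_mul (Nat.zero_le _) (Nat.zero_le _)
      (hT ▸ (card_le_card subset_product).trans (card_product _ _).le)
  have hk : 2 * k * (k - 1) = 2 * k ^ 2 - 2 * k := by
    rw [Nat.mul_sub_one, sq, ← mul_assoc]
  omega

def latticeRect (m n : ℕ) : Finset (ℤ × ℤ) := Ico 0 (m : ℤ) ×ˢ Ico 0 (n : ℤ)

lemma card_latticeRect (m n : ℕ) : #(latticeRect m n) = m * n := by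
  simp [latticeRect]

lemma card_filter_add_right_mem_latticeRect (m n : ℕ) :
    #{p ∈ latticeRect m n | p + (1, 0) ∈ latticeRect m n} = (m - 1) * n := by
  have : {p ∈ latticeRect m n | p + (1, 0) ∈ latticeRect m n} =
      Ico 0 ((m - 1 : ℕ) : ℤ) ×ˢ Ico 0 (n : ℤ) := by
    ext ⟨a, b⟩
    simp only [latticeRect, mem_filter, mem_product, mem_Ico, Prod.mk_add_mk]
    omega
  simp [this]

lemma card_filter_add_up_mem_latticeRect (m n : ℕ) :
    #{p ∈ latticeRect m n | p + (0, 1) ∈ latticeRect m n} = m * (n - 1) := by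
  have : {p ∈ latticeRect m n | p + (0, 1) ∈ latticeRect m n} =
      Ico 0 (m : ℤ) ×ˢ Ico 0 ((n - 1 : ℕ) : ℤ) := by
    ext ⟨a, b⟩
    simp only [latticeRect, mem_filter, mem_product, mem_Ico, Prod.mk_add_mk]
    omega
  simp [this]

def gridPoint (p : ℤ × ℤ) : EuclideanSpace ℝ (Fin 2) := !₂[2 * p.1, 2 * p.2]

@[simp] lemma gridPoint_zero (p : ℤ × ℤ) : gridPoint p 0 = 2 * p.1 := rfl

@[simp] lemma gridPoint_one (p : ℤ × ℤ) : gridPoint p 1 = 2 * p.2 := rfl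

lemma gridPoint_injective : Function.Injective gridPoint := by
  intro p q h
  have h0 := congrArg (· 0) h
  have h1 := congrArg (· 1) h
  simp only [gridPoint_zero, gridPoint_one, mul_eq_mul_left_iff, Int.cast_inj] at h0 h1
  exact Prod.ext (h0.resolve_right two_ne_zero) (h1.resolve_right two_ne_zero)

lemma exists_image_gridPoint_eq (S : Finset (EuclideanSpace ℝ (Fin 2)))
    (hS : ∀ x ∈ S, ∀ i, ∃ a : ℤ, x i = 2 * a) :
    ∃ T : Finset (ℤ × ℤ), T.image gridPoint = S := by
  obtain ⟨T, -, hT⟩ := subset_set_image_iff (f := gridPoint) |>.1 fun x hx => by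
    obtain ⟨a, ha⟩ := hS x hx 0
    obtain ⟨b, hb⟩ := hS x hx 1
    refine ⟨(a, b), Set.mem_univ _, ?_⟩
    ext i
    fin_cases i <;> simp [ha, hb]
  exact ⟨T, hT⟩

def unitSteps : Finset (ℤ × ℤ) := {(1, 0), (0, 1)}

lemma sq_add_sq_eq_one_iff (a b : ℤ) :
    a ^ 2 + b ^ 2 = 1 ↔ (a, b) ∈ unitSteps ∪ -unitSteps := by
  constructor
  · intro h
    have : -1 ≤ a := by nlinarith
    have : a ≤ 1 := by nlinarith
    have : -1 ≤ b := by nlinarith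
    have : b ≤ 1 := by nlinarith
    interval_cases a <;> interval_cases b <;> simp_all [unitSteps]
  · simp only [unitSteps, neg_insert, neg_singleton, mem_union, mem_insert, mem_singleton,
      Prod.neg_mk, Prod.mk.injEq]
    rintro ((⟨rfl, rfl⟩ | ⟨rfl, rfl⟩) | (⟨rfl, rfl⟩ | ⟨rfl, rfl⟩)) <;> norm_num

lemma dist_gridPoint_eq_two_iff (p q : ℤ × ℤ) :
    dist (gridPoint p) (gridPoint q) = 2 ↔ q - p ∈ unitSteps ∪ -unitSteps := by
  have hsq : dist (gridPoint p) (gridPoint q) = 2 ↔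
      ((q.1 - p.1) ^ 2 + (q.2 - p.2) ^ 2 : ℤ) = 1 := by
    rw [EuclideanSpace.dist_eq, Real.sqrt_eq_iff_mul_self_eq_of_pos two_pos, Fin.sum_univ_two]
    simp only [gridPoint_zero, gridPoint_one, Real.dist_eq, sq_abs]
    constructor <;> intro h
    · exact_mod_cast (by linarith : ((q.1 : ℝ) - p.1) ^ 2 + ((q.2 : ℝ) - p.2) ^ 2 = 1)
    · have : ((q.1 : ℝ) - p.1) ^ 2 + ((q.2 : ℝ) - p.2) ^ 2 = 1 := by exact_mod_cast h
      linarith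
  rw [hsq, sq_add_sq_eq_one_iff]
  rfl

lemma tangencies_image_gridPoint (T : Finset (ℤ × ℤ)) :
    tangencies (T.image gridPoint) =
      #{p ∈ T | p + (1, 0) ∈ T} + #{p ∈ T | p + (0, 1) ∈ T} := by
  have hdiag : ((T.image gridPoint).offDiag.filter fun x => dist x.1 x.2 = 2) =
      ((T ×ˢ T).image (Prod.map gridPoint gridPoint)).filter fun x => dist x.1 x.2 = 2 := by
    rw [prodMap_image_product]
    ext ⟨x, y⟩
    simp only [mem_filter, mem_offDiag, mem_product]
    exact ⟨fun h => ⟨⟨h.1.1, h.1.2.1⟩, h.2⟩,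
      fun h => ⟨⟨h.1.1, h.1.2, fun hxy => by simp [hxy] at h⟩, h.2⟩⟩
  have hsteps : Disjoint unitSteps (-unitSteps) := by decide
  rw [tangencies, hdiag, filter_image,
    card_image_of_injective _ (gridPoint_injective.prodMap gridPoint_injective)]
  simp only [Prod.map_fst, Prod.map_snd, dist_gridPoint_eq_two_iff]
  rw [card_filter_sub_mem_union_neg _ _ hsteps, card_filter_sub_mem, unitSteps,
    sum_pair (by decide)]
  omega

theorem stmt15_general (k : ℕ) :
    IsGreatest {m | ∃ S : Finset (EuclideanSpace ℝ (Fin 2)),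
        (∀ x ∈ S, ∀ i, ∃ a : ℤ, x i = 2 * a) ∧ S.card = k ^ 2 ∧ tangencies S = m}
      (2 * k * (k - 1)) := by
  constructor
  · refine ⟨(latticeRect k k).image gridPoint, ?_, ?_, ?_⟩
    · simp only [mem_image]
      rintro _ ⟨p, -, rfl⟩ i
      fin_cases i
      exacts [⟨p.1, rfl⟩, ⟨p.2, rfl⟩]
    · rw [card_image_of_injective _ gridPoint_injective, card_latticeRect, sq]
    · rw [tangencies_image_gridPoint, card_filter_add_right_mem_latticeRect,
        card_filter_add_up_mem_latticeRect]
      ring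
  · rintro m ⟨S, hS, hcard, rfl⟩
    obtain ⟨T, rfl⟩ := exists_image_gridPoint_eq S hS
    rw [card_image_of_injective _ gridPoint_injective] at hcard
    rw [tangencies_image_gridPoint]
    exact card_horizontal_add_vertical_le T k hcard

theorem stmt15 (k : ℕ) (hk : 1 ≤ k) :
    IsGreatest {m | ∃ S : Finset (EuclideanSpace ℝ (Fin 2)),
        (∀ x ∈ S, ∀ i, ∃ a : ℤ, x i = 2 * a) ∧ S.card = k ^ 2 ∧ tangencies S = m}
      (2 * k * (k - 1)) :=
  stmt15_general k

end
end
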